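/- arXiv:1507.02592 — 4 statements merged into one kernel-verified Lean document; each statement's English description precedes it below -/
import Mathlib

section
/- For any bounded random variable X taking values in [-a,a], with κ(x) = (e^x - x - 1)/x² (extended by κ(0)=1/2), we have κ(-2a)·Var(X) ≤ E[X] + log E[e^{-X}] ≤ κ(2a)·Var(X). -/
open MeasureTheory Real

noncomputable def kappa (x : ℝ) : ℝ :=
  if x = 0 then 1/2 else (Real.exp x - x - 1) / x ^ 2

/-!
Put `Y = -X` and `ψ = cgf Y μ`, so that `E[X] + log E[e^{-X}] = ψ 1 - ψ 0 - ψ' 0`, and `ψ'' t` is the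
variance of `Y` under the tilted measure `μ.tilted (t * Y ·)`. For `0 ≤ t` the density of that measure
with respect to `μ` lies in `[e^{-2at}, e^{2at}]`, and the variance is the least mean square deviation
from a constant, so `e^{-2at} Var Y ≤ ψ'' t ≤ e^{2at} Var Y`. Comparing `ψ` on `[0, 1]` with
`E t = V (e^{ct} - ct) / c²` (`V t² / 2` if `c = 0`), which has `E'' t = V e^{ct}` and
`E 1 - E 0 - E' 0 = V κ(c)`, for `c = ±2a` gives both bounds.
-/

open ProbabilityTheory Set

theorem sub_sub_le_sub_sub_of_hasDerivAt_two {f f' f'' g g' g'' : ℝ → ℝ}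
    (hf : ∀ t, HasDerivAt f (f' t) t) (hf' : ∀ t, HasDerivAt f' (f'' t) t)
    (hg : ∀ t, HasDerivAt g (g' t) t) (hg' : ∀ t, HasDerivAt g' (g'' t) t)
    (h : ∀ t ∈ Icc (0 : ℝ) 1, f'' t ≤ g'' t) :
    f 1 - f 0 - f' 0 ≤ g 1 - g 0 - g' 0 := by
  have hd' : MonotoneOn (fun t => g' t - f' t) (Icc 0 1) :=
    monotoneOn_of_hasDerivWithinAt_nonneg (convex_Icc 0 1)
      (fun t _ => ((hg' t).sub (hf' t)).continuousAt.continuousWithinAt)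
      (fun t _ => ((hg' t).sub (hf' t)).hasDerivWithinAt)
      (fun t ht => sub_nonneg.2 (h t (interior_subset ht)))
  have hD (t : ℝ) : HasDerivAt (fun t => g t - f t - (g' 0 - f' 0) * t)
      (g' t - f' t - (g' 0 - f' 0)) t :=
    ((hg t).sub (hf t)).sub (((hasDerivAt_id' t).const_mul _).congr_deriv (mul_one _))
  have hd : MonotoneOn (fun t => g t - f t - (g' 0 - f' 0) * t) (Icc 0 1) :=
    monotoneOn_of_hasDerivWithinAt_nonneg (convex_Icc 0 1)
      (fun t _ => (hD t).continuousAt.continuousWithinAt) (fun t _ => (hD t).hasDerivWithinAt)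
      (fun t ht => sub_nonneg.2 <|
        hd' (left_mem_Icc.2 zero_le_one) (interior_subset ht) (interior_subset ht).1)
  have := hd (left_mem_Icc.2 zero_le_one) (right_mem_Icc.2 zero_le_one) zero_le_one
  simp only [mul_zero, mul_one] at this
  linarith

theorem exists_second_antideriv_exp_mul (c : ℝ) :
    ∃ E E' : ℝ → ℝ, (∀ t, HasDerivAt E (E' t) t) ∧ (∀ t, HasDerivAt E' (exp (c * t)) t) ∧
      E 1 - E 0 - E' 0 = kappa c := by
  rcases eq_or_ne c 0 with rfl | hc
  · refine ⟨fun t => t ^ 2 / 2, fun t => t, fun t => ?_, fun t => ?_, by norm_num [kappa]⟩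
    · simpa using ((hasDerivAt_id' t).pow 2).div_const 2
    · exact (hasDerivAt_id' t).congr_deriv (by simp)
  · refine ⟨fun t => (exp (c * t) - c * t) / c ^ 2, fun t => (exp (c * t) - 1) / c,
      fun t => ?_, fun t => ?_, ?_⟩
    · refine (((((hasDerivAt_id' t).const_mul c).exp).sub
        ((hasDerivAt_id' t).const_mul c)).div_const (c ^ 2)).congr_deriv ?_
      field_simp
    · refine ((((hasDerivAt_id' t).const_mul c).exp.sub_const 1).div_const c).congr_deriv ?_
      field_simp
    · simp only [kappa, hc, if_false, mul_zero, exp_zero, mul_one]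
      ring

theorem sub_sub_le_mul_kappa {f f' f'' : ℝ → ℝ} (hf : ∀ t, HasDerivAt f (f' t) t)
    (hf' : ∀ t, HasDerivAt f' (f'' t) t) {V c : ℝ}
    (h : ∀ t ∈ Icc (0 : ℝ) 1, f'' t ≤ V * exp (c * t)) :
    f 1 - f 0 - f' 0 ≤ V * kappa c := by
  obtain ⟨E, E', hE, hE', hκ⟩ := exists_second_antideriv_exp_mul c
  have := sub_sub_le_sub_sub_of_hasDerivAt_two hf hf'
    (fun t => (hE t).const_mul V) (fun t => (hE' t).const_mul V) h
  rw [← hκ]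
  linarith

theorem mul_kappa_le_sub_sub {f f' f'' : ℝ → ℝ} (hf : ∀ t, HasDerivAt f (f' t) t)
    (hf' : ∀ t, HasDerivAt f' (f'' t) t) {V c : ℝ}
    (h : ∀ t ∈ Icc (0 : ℝ) 1, V * exp (c * t) ≤ f'' t) :
    V * kappa c ≤ f 1 - f 0 - f' 0 := by
  obtain ⟨E, E', hE, hE', hκ⟩ := exists_second_antideriv_exp_mul c
  have := sub_sub_le_sub_sub_of_hasDerivAt_two
    (fun t => (hE t).const_mul V) (fun t => (hE' t).const_mul V) hf hf' h
  rw [← hκ]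
  linarith

section

variable {Ω : Type*} [MeasurableSpace Ω] {μ ν : Measure Ω} {X : Ω → ℝ} {a : ℝ}

theorem variance_le_integral_sub_sq [IsProbabilityMeasure μ] (hX : AEStronglyMeasurable X μ)
    (c : ℝ) : Var[X; μ] ≤ ∫ ω, (X ω - c) ^ 2 ∂μ := by
  rw [← variance_sub_const hX c]
  exact variance_le_expectation_sq (by fun_prop)

theorem variance_le_mul_of_le_smul [IsFiniteMeasure μ] [IsProbabilityMeasure ν] {K : ℝ}
    (hK : 0 ≤ K) (hνμ : ν ≤ ENNReal.ofReal K • μ) (hX : MemLp X 2 μ) :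
    Var[X; ν] ≤ K * Var[X; μ] := by
  have hsq : Integrable (fun ω => (X ω - μ[X]) ^ 2) μ :=
    (hX.sub (memLp_const _)).integrable_sq
  calc Var[X; ν] ≤ ∫ ω, (X ω - μ[X]) ^ 2 ∂ν :=
        variance_le_integral_sub_sq
          (hX.1.mono_ac (Measure.absolutelyContinuous_of_le_smul hνμ)) _
    _ ≤ ∫ ω, (X ω - μ[X]) ^ 2 ∂(ENNReal.ofReal K • μ) :=
        integral_mono_measure hνμ (ae_of_all _ fun ω => sq_nonneg _)
          (hsq.smul_measure ENNReal.ofReal_ne_top)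
    _ = K * Var[X; μ] := by
        rw [integral_smul_measure, ENNReal.toReal_ofReal hK,
          variance_eq_integral hX.1.aemeasurable, smul_eq_mul]

theorem integrable_exp_of_mem_Icc [IsFiniteMeasure μ] {f : Ω → ℝ} {b₁ b₂ : ℝ}
    (hfm : AEMeasurable f μ) (hf : ∀ᵐ ω ∂μ, f ω ∈ Icc b₁ b₂) :
    Integrable (fun ω => exp (f ω)) μ :=
  Integrable.of_mem_Icc (exp b₁) (exp b₂) hfm.exp
    (hf.mono fun _ h => ⟨exp_le_exp.2 h.1, exp_le_exp.2 h.2⟩)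

theorem tilted_le_smul [IsProbabilityMeasure μ] {f : Ω → ℝ} {b₁ b₂ : ℝ}
    (hfm : AEMeasurable f μ) (hf : ∀ᵐ ω ∂μ, f ω ∈ Icc b₁ b₂) :
    μ.tilted f ≤ ENNReal.ofReal (exp (b₂ - b₁)) • μ := by
  have hZ : exp b₁ ≤ ∫ ω, exp (f ω) ∂μ := by
    simpa using integral_mono_ae (integrable_const (exp b₁))
      (integrable_exp_of_mem_Icc hfm hf) (hf.mono fun _ h => exp_le_exp.2 h.1)
  refine Measure.le_iff.2 fun s hs => ?_
  rw [tilted_apply' _ _ hs, Measure.smul_apply, smul_eq_mul, ← setLIntegral_const]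
  refine setLIntegral_mono_ae' hs (hf.mono fun ω h _ => ENNReal.ofReal_le_ofReal ?_)
  rw [exp_sub, div_le_div_iff₀ (lt_of_lt_of_le (exp_pos _) hZ) (exp_pos _)]
  exact mul_le_mul (exp_le_exp.2 h.2) hZ (exp_pos _).le (exp_pos _).le

theorem le_smul_tilted [IsProbabilityMeasure μ] {f : Ω → ℝ} {b₁ b₂ : ℝ}
    (hfm : AEMeasurable f μ) (hf : ∀ᵐ ω ∂μ, f ω ∈ Icc b₁ b₂) :
    μ ≤ ENNReal.ofReal (exp (b₂ - b₁)) • μ.tilted f := by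
  have hint := integrable_exp_of_mem_Icc hfm hf
  have := isProbabilityMeasure_tilted hint
  have hac := tilted_absolutelyContinuous μ f
  have key := tilted_le_smul (μ := μ.tilted f) (f := -f) (b₁ := -b₂) (b₂ := -b₁)
    (hfm.neg.mono_ac hac) (hac (hf.mono fun _ h => ⟨neg_le_neg h.2, neg_le_neg h.1⟩))
  rwa [tilted_neg_same hint, neg_sub_neg] at key

theorem integrableExpSet_eq_univ_of_abs_le [IsFiniteMeasure μ] (hm : AEMeasurable X μ)
    (hb : ∀ᵐ ω ∂μ, |X ω| ≤ a) : integrableExpSet X μ = univ := by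
  ext t
  exact iff_of_true (integrable_exp_mul_of_mem_Icc hm (hb.mono fun _ h => abs_le.1 h)) trivial

theorem mul_mem_Icc_of_abs_le (hb : ∀ᵐ ω ∂μ, |X ω| ≤ a) {t : ℝ} (ht : 0 ≤ t) :
    ∀ᵐ ω ∂μ, t * X ω ∈ Icc (-(a * t)) (a * t) :=
  hb.mono fun _ h => by
    obtain ⟨h₁, h₂⟩ := abs_le.1 h
    constructor <;> nlinarith

theorem hasDerivAt_cgf_of_abs_le [IsFiniteMeasure μ] (hm : AEMeasurable X μ)
    (hb : ∀ᵐ ω ∂μ, |X ω| ≤ a) (t : ℝ) : HasDerivAt (cgf X μ) (deriv (cgf X μ) t) t :=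
  (analyticAt_cgf (by simp [integrableExpSet_eq_univ_of_abs_le hm hb])).differentiableAt.hasDerivAt

theorem hasDerivAt_deriv_cgf_of_abs_le [IsFiniteMeasure μ] (hm : AEMeasurable X μ)
    (hb : ∀ᵐ ω ∂μ, |X ω| ≤ a) (t : ℝ) :
    HasDerivAt (deriv (cgf X μ)) (iteratedDeriv 2 (cgf X μ) t) t := by
  rw [iteratedDeriv_succ, iteratedDeriv_one]
  exact (analyticAt_cgf (by simp [integrableExpSet_eq_univ_of_abs_le hm hb])).deriv
    |>.differentiableAt.hasDerivAt

theorem iteratedDeriv_two_cgf_le [IsProbabilityMeasure μ] (hm : AEMeasurable X μ)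
    (hb : ∀ᵐ ω ∂μ, |X ω| ≤ a) {t : ℝ} (ht : 0 ≤ t) :
    iteratedDeriv 2 (cgf X μ) t ≤ Var[X; μ] * exp (2 * a * t) := by
  have hbd := mul_mem_Icc_of_abs_le hb ht
  have := isProbabilityMeasure_tilted (integrable_exp_of_mem_Icc (hm.const_mul t) hbd)
  rw [← variance_tilted_mul (by simp [integrableExpSet_eq_univ_of_abs_le hm hb]), mul_comm,
    show 2 * a * t = a * t - -(a * t) by ring]
  exact variance_le_mul_of_le_smul (exp_pos _).le (tilted_le_smul (hm.const_mul t) hbd)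
    (memLp_of_bounded (hb.mono fun _ h => abs_le.1 h) hm.aestronglyMeasurable 2)

theorem le_iteratedDeriv_two_cgf [IsProbabilityMeasure μ] (hm : AEMeasurable X μ)
    (hb : ∀ᵐ ω ∂μ, |X ω| ≤ a) {t : ℝ} (ht : 0 ≤ t) :
    Var[X; μ] * exp (-(2 * a) * t) ≤ iteratedDeriv 2 (cgf X μ) t := by
  have hbd := mul_mem_Icc_of_abs_le hb ht
  have hint : t ∈ interior (integrableExpSet X μ) := by
    simp [integrableExpSet_eq_univ_of_abs_le hm hb]
  have := isProbabilityMeasure_tilted (integrable_exp_of_mem_Icc (hm.const_mul t) hbd)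
  have key := variance_le_mul_of_le_smul (exp_pos _).le (le_smul_tilted (hm.const_mul t) hbd)
    (memLp_tilted_mul hint 2)
  rw [variance_tilted_mul hint, show a * t - -(a * t) = 2 * a * t by ring] at key
  rwa [neg_mul, exp_neg, ← div_eq_mul_inv, div_le_iff₀ (exp_pos _), mul_comm]

theorem cgf_one_sub_integral_mem_Icc [IsProbabilityMeasure μ] (hm : AEMeasurable X μ)
    (hb : ∀ᵐ ω ∂μ, |X ω| ≤ a) :
    cgf X μ 1 - μ[X] ∈ Icc (Var[X; μ] * kappa (-(2 * a))) (Var[X; μ] * kappa (2 * a)) := by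
  have h := sub_sub_le_mul_kappa (hasDerivAt_cgf_of_abs_le hm hb)
    (hasDerivAt_deriv_cgf_of_abs_le hm hb) (fun t ht => iteratedDeriv_two_cgf_le hm hb ht.1)
  have h' := mul_kappa_le_sub_sub (hasDerivAt_cgf_of_abs_le hm hb)
    (hasDerivAt_deriv_cgf_of_abs_le hm hb) (fun t ht => le_iteratedDeriv_two_cgf hm hb ht.1)
  rw [cgf_zero, deriv_cgf_zero (by simp [integrableExpSet_eq_univ_of_abs_le hm hb]),
    probReal_univ, div_one, sub_zero] at h h'
  exact ⟨h', h⟩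

end

/-- For any bounded random variable `X` taking values in `[-a,a]`,
`κ(-2a)·Var(X) ≤ E[X] + log E[e^{-X}] ≤ κ(2a)·Var(X)`. -/
theorem stmt0 {Ω : Type*} [MeasurableSpace Ω] (μ : Measure Ω) [IsProbabilityMeasure μ]
    (X : Ω → ℝ) (hX : Measurable X) (a : ℝ) (hbound : ∀ᵐ ω ∂μ, |X ω| ≤ a) :
    kappa (-(2*a)) * (∫ ω, (X ω - ∫ ω', X ω' ∂μ) ^ 2 ∂μ) ≤
      (∫ ω, X ω ∂μ) + Real.log (∫ ω, Real.exp (-X ω) ∂μ) ∧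
    (∫ ω, X ω ∂μ) + Real.log (∫ ω, Real.exp (-X ω) ∂μ) ≤
      kappa (2*a) * (∫ ω, (X ω - ∫ ω', X ω' ∂μ) ^ 2 ∂μ) := by
  have h := cgf_one_sub_integral_mem_Icc (X := fun ω => -X ω) hX.neg.aemeasurable
    (by simpa using hbound)
  have hcgf : cgf (fun ω => -X ω) μ 1 = log (∫ ω, exp (-X ω) ∂μ) := by simp [cgf, mgf]
  rw [variance_fun_neg, variance_eq_integral hX.aemeasurable, integral_neg, hcgf,
    sub_neg_eq_add, add_comm, mul_comm, mul_comm _ (kappa (2 * a))] at h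
  exact h
end

section
/- The function κ(x) = (e^x - x - 1)/x² (with κ(0) = 1/2) is nondecreasing on ℝ. -/
/-!
Taylor's formula with integral remainder gives `κ x = ∫₀¹ (1 - t) e^{t x} dt`, and for each
`t ∈ [0, 1]` the integrand has nonnegative weight `1 - t` and is nondecreasing in `x`.
-/

open Real

lemma intervalIntegrable_one_sub_mul_exp (x a b : ℝ) :
    IntervalIntegrable (fun t : ℝ => (1 - t) * exp (t * x)) MeasureTheory.volume a b :=
  (by fun_prop : Continuous fun t : ℝ => (1 - t) * exp (t * x)).intervalIntegrable a b

lemma hasDerivAt_kappa_antideriv {x : ℝ} (hx : x ≠ 0) (t : ℝ) :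
    HasDerivAt (fun t : ℝ => (x * (1 - t) + 1) * exp (t * x) / x ^ 2)
      ((1 - t) * exp (t * x)) t := by
  have hlin : HasDerivAt (fun t : ℝ => x * (1 - t) + 1) (-x) t := by
    simpa using (((hasDerivAt_id t).const_sub 1).const_mul x).add_const 1
  have hexp : HasDerivAt (fun t : ℝ => exp (t * x)) (exp (t * x) * x) t := by
    simpa using ((hasDerivAt_id t).mul_const x).exp
  refine ((hlin.mul hexp).div_const (x ^ 2)).congr_deriv ?_
  rw [div_eq_iff (pow_ne_zero 2 hx)]
  ring

lemma kappa_eq_integral (x : ℝ) : kappa x = ∫ t in (0 : ℝ)..1, (1 - t) * exp (t * x) := by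
  by_cases hx : x = 0
  · subst hx
    simp only [mul_zero, exp_zero, mul_one]
    rw [intervalIntegral.integral_sub intervalIntegrable_const
      intervalIntegral.intervalIntegrable_id]
    norm_num [kappa, integral_id]
  · rw [intervalIntegral.integral_eq_sub_of_hasDerivAt
      (fun t _ => hasDerivAt_kappa_antideriv hx t) (intervalIntegrable_one_sub_mul_exp x 0 1)]
    simp only [kappa, if_neg hx, zero_mul, exp_zero]
    field_simp
    ring

/-- The function `κ(x) = (e^x - x - 1)/x²` (with `κ(0) = 1/2`) is nondecreasing on `ℝ`. -/
theorem stmt1 : Monotone kappa := by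
  intro x y hxy
  simp only [kappa_eq_integral]
  refine intervalIntegral.integral_mono_on zero_le_one
    (intervalIntegrable_one_sub_mul_exp x 0 1) (intervalIntegrable_one_sub_mul_exp y 0 1)
    fun t ⟨ht0, ht1⟩ => ?_
  have : 0 ≤ 1 - t := by linarith
  gcongr
end

section
/- E[X] + log E[e^{-X}] = min over μ ∈ [-a,a] of E[e^{μ-X} - (μ-X) - 1], for any random variable X with values in [-a,a]; the minimum is attained at μ = -log E[e^{-X}]. -/
open MeasureTheory Real

/-!
Writing `Z = E[e^{-X}]`, linearity of the integral gives
`E[e^{m-X} - (m-X) - 1] = e^m Z - m + E[X] - 1`. At `m = -log Z` it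
equals `E[X] + log Z`, and `e^m Z - m ≥ 1 + log Z` for every `m` is `e^t ≥ 1 + t` at
`t = m + log Z`. Since `e^{-a} ≤ Z ≤ e^a`, the minimiser `-log Z` lies in `[-a, a]`.
-/

lemma one_add_log_le_exp_mul_sub {Z : ℝ} (hZ : 0 < Z) (m : ℝ) : 1 + log Z ≤ exp m * Z - m := by
  have h := add_one_le_exp (m + log Z)
  rw [exp_add, exp_log hZ] at h
  linarith

section

variable {Ω : Type*} [MeasurableSpace Ω] {μ : Measure Ω} [IsProbabilityMeasure μ] {X : Ω → ℝ}

lemma integrable_exp_neg_of_abs_le {a : ℝ} (hX : AEMeasurable X μ)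
    (hbound : ∀ᵐ ω ∂μ, |X ω| ≤ a) : Integrable (fun ω => exp (-X ω)) μ :=
  .of_bound (hX.neg.exp.aestronglyMeasurable) (exp a) <| hbound.mono fun ω h => by
    rw [norm_of_nonneg (exp_pos _).le, exp_le_exp]
    linarith [(abs_le.1 h).1]

lemma integral_exp_neg_mem_Icc {a : ℝ} (hX : AEMeasurable X μ) (hbound : ∀ᵐ ω ∂μ, |X ω| ≤ a) :
    ∫ ω, exp (-X ω) ∂μ ∈ Set.Icc (exp (-a)) (exp a) := by
  have hE := integrable_exp_neg_of_abs_le hX hbound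
  constructor
  · simpa using integral_mono_ae (integrable_const (exp (-a))) hE <|
      hbound.mono fun ω h => exp_le_exp.2 (by linarith [(abs_le.1 h).2])
  · simpa using integral_mono_ae hE (integrable_const (exp a)) <|
      hbound.mono fun ω h => exp_le_exp.2 (by linarith [(abs_le.1 h).1])

lemma integral_exp_sub_sub_sub_one (hX : Integrable X μ)
    (hE : Integrable (fun ω => exp (-X ω)) μ) (m : ℝ) :
    ∫ ω, (exp (m - X ω) - (m - X ω) - 1) ∂μ
      = exp m * ∫ ω, exp (-X ω) ∂μ - m + ∫ ω, X ω ∂μ - 1 := by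
  have hfun : ∀ ω, exp (m - X ω) - (m - X ω) - 1 = exp m * exp (-X ω) - m + X ω - 1 :=
    fun ω => by rw [← exp_add]; ring_nf
  simp_rw [hfun]
  have hEm : Integrable (fun ω => exp m * exp (-X ω)) μ := hE.const_mul (exp m)
  have hEm' : Integrable (fun ω => exp m * exp (-X ω) - m) μ := hEm.sub (integrable_const m)
  have hsum : Integrable (fun ω => exp m * exp (-X ω) - m + X ω) μ := hEm'.add hX
  rw [integral_sub hsum (integrable_const 1), integral_add hEm' hX,
    integral_sub hEm (integrable_const m), integral_const_mul]
  simp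

end

theorem stmt2_general {Ω : Type*} [MeasurableSpace Ω] (μ : Measure Ω) [IsProbabilityMeasure μ]
    (X : Ω → ℝ) (hX : Measurable X) (a : ℝ)
    (hbound : ∀ᵐ ω ∂μ, |X ω| ≤ a) :
    (-Real.log (∫ ω, Real.exp (-X ω) ∂μ)) ∈ Set.Icc (-a) a ∧
    (∫ ω, (Real.exp ((-Real.log (∫ ω', Real.exp (-X ω') ∂μ)) - X ω)
        - ((-Real.log (∫ ω', Real.exp (-X ω') ∂μ)) - X ω) - 1) ∂μ)
      = (∫ ω, X ω ∂μ) + Real.log (∫ ω, Real.exp (-X ω) ∂μ) ∧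
    ∀ m ∈ Set.Icc (-a) a,
      (∫ ω, (Real.exp ((-Real.log (∫ ω', Real.exp (-X ω') ∂μ)) - X ω)
          - ((-Real.log (∫ ω', Real.exp (-X ω') ∂μ)) - X ω) - 1) ∂μ)
        ≤ ∫ ω, (Real.exp (m - X ω) - (m - X ω) - 1) ∂μ := by
  have hXi : Integrable X μ := .of_bound hX.aestronglyMeasurable a hbound
  have hEi := integrable_exp_neg_of_abs_le hX.aemeasurable hbound
  obtain ⟨hZlo, hZhi⟩ := integral_exp_neg_mem_Icc hX.aemeasurable hbound
  set Z := ∫ ω, exp (-X ω) ∂μ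
  have hZpos : 0 < Z := (exp_pos _).trans_le hZlo
  have hmin : ∫ ω, (exp (-log Z - X ω) - (-log Z - X ω) - 1) ∂μ = ∫ ω, X ω ∂μ + log Z := by
    rw [integral_exp_sub_sub_sub_one hXi hEi, exp_neg, exp_log hZpos, inv_mul_cancel₀ hZpos.ne']
    ring
  refine ⟨⟨?_, ?_⟩, hmin, fun m _ => ?_⟩
  · linarith [(log_le_iff_le_exp hZpos).2 hZhi]
  · linarith [(le_log_iff_exp_le hZpos).2 hZlo]
  · rw [hmin, integral_exp_sub_sub_sub_one hXi hEi m]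
    linarith [one_add_log_le_exp_mul_sub hZpos m]

/-- `E[X] + log E[e^{-X}] = min_{μ₀ ∈ [-a,a]} E[e^{μ₀-X} - (μ₀-X) - 1]`, the minimum
being attained at `μ₀ = -log E[e^{-X}]` (which lies in `[-a,a]`). -/
theorem stmt2 {Ω : Type*} [MeasurableSpace Ω] (μ : Measure Ω) [IsProbabilityMeasure μ]
    (X : Ω → ℝ) (hX : Measurable X) (a : ℝ) (ha : 0 ≤ a)
    (hbound : ∀ᵐ ω ∂μ, |X ω| ≤ a) :
    (-Real.log (∫ ω, Real.exp (-X ω) ∂μ)) ∈ Set.Icc (-a) a ∧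
    (∫ ω, (Real.exp ((-Real.log (∫ ω', Real.exp (-X ω') ∂μ)) - X ω)
        - ((-Real.log (∫ ω', Real.exp (-X ω') ∂μ)) - X ω) - 1) ∂μ)
      = (∫ ω, X ω ∂μ) + Real.log (∫ ω, Real.exp (-X ω) ∂μ) ∧
    ∀ m ∈ Set.Icc (-a) a,
      (∫ ω, (Real.exp ((-Real.log (∫ ω', Real.exp (-X ω') ∂μ)) - X ω)
          - ((-Real.log (∫ ω', Real.exp (-X ω') ∂μ)) - X ω) - 1) ∂μ)
        ≤ ∫ ω, (Real.exp (m - X ω) - (m - X ω) - 1) ∂μ :=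
  stmt2_general μ X hX a hbound
end

section
/- Let W be a random variable with values in [-1,1], mean E[W] = a/n > 0, and log E[e^{-η*W}] = 0 for some η* > 0, with a/n < (cosh(η*)-1)/sinh(η*). Then log E[e^{-(η*/2)W}] ≤ -0.21·min(η*,1)·a/n. -/
open MeasureTheory ProbabilityTheory Real Set

/-!
With `c = 0.21 · min η* 1` and `θ = c / η*`, every `w ≤ 1` satisfies the pointwise bound
`e^{-(η*/2) w} ≤ (1/2 - θ) e^{-η* w} + (1/2 + θ) - c w`.
Taking expectations and using `E[e^{-η* W}] = 1`, `E[W] = a/n` gives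
`E[e^{-(η*/2) W}] ≤ 1 - c · a/n`, and `log x ≤ x - 1` finishes.
Writing `s = η* w / 2` and `u = e^{-s}`, the pointwise bound is `θ (u² - 1 + 2s) ≤ (1 - u)² / 2`,
which is a one-variable calculus exercise on `s ≤ 1/2` (where `θ ≤ 0.21`) and on `s ≥ 1/2`
(where `θ s ≤ 0.105`). Both cases are nearly tight at `s = 1/2`, which is what fixes the
constant `0.21`.
-/

lemma le_of_hasDerivAt_nonneg {f f' : ℝ → ℝ} (hf : ∀ x, HasDerivAt f (f' x) x) {a b : ℝ}
    (hab : a ≤ b) (hf' : ∀ x ∈ Ioo a b, 0 ≤ f' x) : f a ≤ f b :=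
  monotoneOn_of_hasDerivWithinAt_nonneg (convex_Icc a b)
    (fun x _ => (hf x).continuousAt.continuousWithinAt) (fun x _ => (hf x).hasDerivWithinAt)
    (by rwa [interior_Icc]) ⟨le_rfl, hab⟩ ⟨hab, le_rfl⟩ hab

lemma le_of_hasDerivAt_nonpos {f f' : ℝ → ℝ} (hf : ∀ x, HasDerivAt f (f' x) x) {a b : ℝ}
    (hab : a ≤ b) (hf' : ∀ x ∈ Ioo a b, f' x ≤ 0) : f b ≤ f a :=
  neg_le_neg_iff.1 <| le_of_hasDerivAt_nonneg (fun x => (hf x).neg) hab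
    fun x hx => neg_nonneg.2 (hf' x hx)

lemma mul_exp_neg_half_sq_le_sq_one_sub :
    21 / 50 * exp (-(1 / 2)) ^ 2 ≤ (1 - exp (-(1 / 2))) ^ 2 := by
  set v := exp (-(1 / 2))
  have hv : v ^ 2 * exp 1 = 1 := by
    rw [← exp_nat_mul, ← exp_add]; norm_num
  have hv_pos : 0 < v := exp_pos _
  have hv_sq : v ^ 2 < 0.36796 := by nlinarith [exp_one_gt_d9]
  have hv_lt : v < 0.6066 := by nlinarith
  nlinarith [mul_pos (sub_pos.2 hv_lt) (by linarith : (0:ℝ) < 2 - 29 / 50 * (v + 0.6066))]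

lemma exp_neg_sq_sub_one_add_le_of_le_half {s : ℝ} (hs : s ≤ 1 / 2) :
    21 / 50 * (exp (-s) ^ 2 - 1 + 2 * s) ≤ (1 - exp (-s)) ^ 2 := by
  set h : ℝ → ℝ := fun s => (1 - exp (-s)) ^ 2 - 21 / 50 * (exp (-s) ^ 2 - 1 + 2 * s)
  have hderiv (x : ℝ) : HasDerivAt h ((1 - exp (-x)) * (29 / 25 * exp (-x) - 21 / 25)) x := by
    have he := (hasDerivAt_neg x).exp
    exact ((((hasDerivAt_const x 1).sub he).pow 2).sub
      ((((he.pow 2).sub_const 1).add ((hasDerivAt_id x).const_mul 2)).const_mul (21 / 50))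
      ).congr_deriv (by norm_num; ring)
  suffices 0 ≤ h s by simp only [h] at this; linarith
  -- `h'` changes sign at `e^{-x} = 1` and `e^{-x} = 21/29`: `h` decreases, increases, decreases,
  -- so on `s ≤ 1/2` it stays above `min (h 0) (h (1/2))`.
  have h0 : h 0 = 0 := by simp [h]
  rcases le_total s 0 with hs0 | hs0
  · rw [← h0]
    refine le_of_hasDerivAt_nonpos hderiv hs0 fun x hx => ?_
    have : 1 ≤ exp (-x) := one_le_exp (by linarith [hx.2])
    nlinarith
  rcases le_total (21 / 29) (exp (-s)) with hu | hu
  · rw [← h0]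
    refine le_of_hasDerivAt_nonneg hderiv hs0 fun x hx => ?_
    have h1 : exp (-x) ≤ 1 := exp_le_one_iff.2 (by linarith [hx.1])
    have h2 : exp (-s) ≤ exp (-x) := exp_le_exp.2 (by linarith [hx.2])
    nlinarith
  · refine (?_ : 0 ≤ h (1 / 2)).trans (le_of_hasDerivAt_nonpos hderiv hs fun x hx => ?_)
    · have := mul_exp_neg_half_sq_le_sq_one_sub
      simp only [h]; linarith
    have h1 : exp (-x) ≤ 1 := exp_le_one_iff.2 (by linarith [hx.1])
    have h2 : exp (-x) ≤ exp (-s) := exp_le_exp.2 (by linarith [hx.1])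
    nlinarith

lemma exp_neg_sq_sub_one_add_le_of_half_le {s : ℝ} (hs : 1 / 2 ≤ s) :
    21 / 100 * (exp (-s) ^ 2 - 1 + 2 * s) ≤ s * (1 - exp (-s)) ^ 2 := by
  set k : ℝ → ℝ := fun s => s * (1 - exp (-s)) ^ 2 - 21 / 100 * (exp (-s) ^ 2 - 1 + 2 * s)
  have hderiv (x : ℝ) :
      HasDerivAt k ((1 - exp (-x)) * (29 / 50 + exp (-x) * (2 * x - 71 / 50))) x := by
    have he := (hasDerivAt_neg x).exp
    exact (((hasDerivAt_id x).mul (((hasDerivAt_const x 1).sub he).pow 2)).sub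
      ((((he.pow 2).sub_const 1).add ((hasDerivAt_id x).const_mul 2)).const_mul (21 / 100))
      ).congr_deriv (by norm_num; ring)
  suffices 0 ≤ k s by simp only [k] at this; linarith
  refine (?_ : 0 ≤ k (1 / 2)).trans (le_of_hasDerivAt_nonneg hderiv hs fun x hx => ?_)
  · have := mul_exp_neg_half_sq_le_sq_one_sub
    simp only [k]; linarith
  have hx1 : 1 / 2 < x := hx.1
  have h0 : 0 < exp (-x) := exp_pos _
  have h1 : exp (-x) ≤ 1 := exp_le_one_iff.2 (by linarith)
  exact mul_nonneg (by linarith) (by nlinarith)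

lemma mul_exp_neg_sq_sub_one_add_le {θ s : ℝ} (hθ : θ ≤ 21 / 100) (hθs : θ * s ≤ 21 / 200) :
    θ * (exp (-s) ^ 2 - 1 + 2 * s) ≤ (1 - exp (-s)) ^ 2 / 2 := by
  have hgap : 0 ≤ exp (-s) ^ 2 - 1 + 2 * s := by
    rw [sq, ← exp_add]
    linarith [add_one_le_exp (-s + -s)]
  rcases le_total s (1 / 2) with hs | hs
  · nlinarith [exp_neg_sq_sub_one_add_le_of_le_half hs, mul_le_mul_of_nonneg_right hθ hgap]
  · have hs0 : 0 < s := by linarith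
    refine le_of_mul_le_mul_right ?_ hs0
    nlinarith [exp_neg_sq_sub_one_add_le_of_half_le hs, mul_le_mul_of_nonneg_right hθs hgap]

lemma exp_neg_half_mul_le {η c w : ℝ} (hη : 0 < η) (hc0 : 0 ≤ c) (hcη : c ≤ 21 / 100 * η)
    (hc : c ≤ 21 / 100) (hw : w ≤ 1) :
    exp (-(η / 2) * w) ≤ (1 / 2 - c / η) * exp (-η * w) + (1 / 2 + c / η) - c * w := by
  have hcw : c * w ≤ 21 / 100 := by rcases le_total 0 w with h | h <;> nlinarith
  have key := mul_exp_neg_sq_sub_one_add_le (θ := c / η) (s := η / 2 * w)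
    ((div_le_iff₀ hη).2 (by linarith)) (by
      rw [div_mul_eq_mul_div, div_le_iff₀ hη]
      nlinarith)
  have hu : exp (-(η / 2 * w)) = exp (-(η / 2) * w) := by rw [neg_mul]
  have hsq : exp (-(η / 2) * w) ^ 2 = exp (-η * w) := by
    rw [sq, ← exp_add]; ring_nf
  have hs : c / η * (2 * (η / 2 * w)) = c * w := by field_simp
  rw [hu] at key
  linear_combination key + (1 / 2 - c / η) * hsq - hs

lemma mgf_neg_half_le {Ω : Type*} [MeasurableSpace Ω] {P : Measure Ω} [IsProbabilityMeasure P]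
    {W : Ω → ℝ} {b η c : ℝ} (hW : AEMeasurable W P) (hrange : ∀ᵐ ω ∂P, W ω ∈ Icc b 1)
    (hη : 0 < η) (hc0 : 0 ≤ c) (hcη : c ≤ 21 / 100 * η) (hc : c ≤ 21 / 100)
    (hmgf : mgf W P (-η) = 1) :
    mgf W P (-(η / 2)) ≤ 1 - c * P[W] := by
  have hWint : Integrable (fun ω => c * W ω) P := (Integrable.of_mem_Icc b 1 hW hrange).const_mul c
  have hexp : Integrable (fun ω => (1 / 2 - c / η) * exp (-η * W ω)) P :=
    (integrable_exp_mul_of_mem_Icc hW hrange).const_mul _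
  have hexp' : Integrable (fun ω => (1 / 2 - c / η) * exp (-η * W ω) + (1 / 2 + c / η)) P :=
    hexp.add (integrable_const _)
  calc mgf W P (-(η / 2))
      ≤ ∫ ω, (1 / 2 - c / η) * exp (-η * W ω) + (1 / 2 + c / η) - c * W ω ∂P := by
        refine integral_mono_ae (integrable_exp_mul_of_mem_Icc hW hrange) (hexp'.sub hWint) ?_
        filter_upwards [hrange] with ω hω
        exact exp_neg_half_mul_le hη hc0 hcη hc hω.2
    _ = (1 / 2 - c / η) * mgf W P (-η) + (1 / 2 + c / η) - c * P[W] := by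
        rw [integral_sub hexp' hWint, integral_add hexp (integrable_const _), integral_const_mul,
          integral_const_mul]
        simp [mgf]
    _ = 1 - c * P[W] := by rw [hmgf]; ring

theorem stmt16_general {Ω : Type*} [MeasurableSpace Ω] (P : Measure Ω) [IsProbabilityMeasure P]
    (W : Ω → ℝ) (hW : Measurable W) (hrange : ∀ ω, W ω ∈ Set.Icc (-1:ℝ) 1)
    (a n ηs : ℝ) (hηs : 0 < ηs)
    (hmean : ∫ ω, W ω ∂P = a/n)
    (hcgf : Real.log (∫ ω, Real.exp (-ηs * W ω) ∂P) = 0) :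
    Real.log (∫ ω, Real.exp (-(ηs/2) * W ω) ∂P) ≤ -0.21 * min ηs 1 * (a/n) := by
  have hrange' : ∀ᵐ ω ∂P, W ω ∈ Icc (-1) 1 := ae_of_all _ hrange
  have hpos (t : ℝ) : 0 < mgf W P t :=
    mgf_pos (integrable_exp_mul_of_mem_Icc hW.aemeasurable hrange')
  have hmgf : mgf W P (-ηs) = 1 := eq_one_of_pos_of_log_eq_zero (hpos _) hcgf
  have hbound := mgf_neg_half_le (c := 21 / 100 * min ηs 1) hW.aemeasurable hrange' hηs
    (by positivity) (by linarith [min_le_left ηs 1]) (by linarith [min_le_right ηs 1]) hmgf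
  calc Real.log (mgf W P (-(ηs / 2)))
      ≤ mgf W P (-(ηs / 2)) - 1 := log_le_sub_one_of_pos (hpos _)
    _ ≤ -0.21 * min ηs 1 * (a / n) := by rw [← hmean]; norm_num at hbound ⊢; linarith

/-- CGF control from the central condition: if `W ∈ [-1,1]`, `E[W] = a/n > 0`,
`log E[e^{-η*W}] = 0` and `a/n < (cosh η* - 1)/sinh η*`, then
`log E[e^{-(η*/2)W}] ≤ -0.21·min(η*,1)·a/n`. -/
theorem stmt16 {Ω : Type*} [MeasurableSpace Ω] (P : Measure Ω) [IsProbabilityMeasure P]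
    (W : Ω → ℝ) (hW : Measurable W) (hrange : ∀ ω, W ω ∈ Set.Icc (-1:ℝ) 1)
    (a n ηs : ℝ) (ha : 0 < a) (hn : 0 < n) (hηs : 0 < ηs)
    (hmean : ∫ ω, W ω ∂P = a/n)
    (hcgf : Real.log (∫ ω, Real.exp (-ηs * W ω) ∂P) = 0)
    (hint : a/n < (Real.cosh ηs - 1) / Real.sinh ηs) :
    Real.log (∫ ω, Real.exp (-(ηs/2) * W ω) ∂P) ≤ -0.21 * min ηs 1 * (a/n) :=
  stmt16_general P W hW hrange a n ηs hηs hmean hcgf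
end
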